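/- arXiv:2204.02077 — 2 statements merged into one kernel-verified Lean document; each statement's English description precedes it below -/
import Mathlib

section
/- For all j, k ≥ 1 and every L ∈ gl(n,ℝ), the Hamiltonians h_k(L) = (1/k)·tr(L^k) are in involution with respect to both r-matrix brackets: {h_j, h_k}_1(L) = 0 and {h_j, h_k}_2(L) = 0. -/
open Matrix

noncomputable section

attribute [local instance] Matrix.frobeniusNormedAddCommGroup Matrix.frobeniusNormedSpace

/-- `gl n` is the space of real `n × n` matrices. -/
abbrev gl (n : ℕ) := Matrix (Fin n) (Fin n) ℝ

variable {n : ℕ}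

/-- The strictly upper triangular part `X_>`. -/
def upPart (X : gl n) : gl n := Matrix.of fun i j => if i < j then X i j else 0

/-- The diagonal part `X_0`. -/
def diagPart (X : gl n) : gl n := Matrix.of fun i j => if i = j then X i j else 0

/-- The strictly lower triangular part `X_<`. -/
def lowPart (X : gl n) : gl n := Matrix.of fun i j => if j < i then X i j else 0

/-- The trace form `⟨X,Y⟩ = tr(XY)`. -/
def trForm (X Y : gl n) : ℝ := (X * Y).trace

/-- `R(X) = ½(X_> + X_0 − X_<) + (X_<)ᵀ`. -/
def Rop (X : gl n) : gl n := (1/2 : ℝ) • (upPart X + diagPart X - lowPart X) + (lowPart X)ᵀ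

/-- `R_a(X) = ½(X_> − X_<)`, the anti-symmetric part of `R`. -/
def Ra (X : gl n) : gl n := (1/2 : ℝ) • (upPart X - lowPart X)

/-- `R_s(X) = ½X_0 + (X_<)ᵀ`, the symmetric part of `R`. -/
def Rs (X : gl n) : gl n := (1/2 : ℝ) • diagPart X + (lowPart X)ᵀ

/-- `r₊ = R_a + ½·id`. -/
def rPlus (X : gl n) : gl n := Ra X + (1/2 : ℝ) • X

/-- `r₋ = R_a − ½·id`. -/
def rMinus (X : gl n) : gl n := Ra X - (1/2 : ℝ) • X

/-- The skew-symmetric part `Z⁺ = ½(Z − Zᵀ)`. -/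
def skewPart (X : gl n) : gl n := (1/2 : ℝ) • (X - Xᵀ)

/-- The symmetric part `Z⁻ = ½(Z + Zᵀ)`. -/
def symPart (X : gl n) : gl n := (1/2 : ℝ) • (X + Xᵀ)

/-- `df` is the gradient of `f` with respect to the trace form:
`tr(df(L)·Y)` is the derivative of `f` at `L` in direction `Y`. -/
def IsGradient (f : gl n → ℝ) (df : gl n → gl n) : Prop :=
  ∀ L Y : gl n, HasDerivAt (fun t : ℝ => f (L + t • Y)) (trForm (df L) Y) 0

/-- `f : gl(n,ℝ) → ℝ` is smooth. -/
def SmoothG (f : gl n → ℝ) : Prop := ContDiff ℝ (⊤ : ℕ∞) f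

/-- The quadratic r-matrix bracket `{f,h}₂(L)`, expressed via the gradient
functions `df`, `dh` of `f` and `h`:
`⟨∇f, R_a∇h⟩ − ⟨∇'f, R_a∇'h⟩ + ⟨∇f, R_s∇'h⟩ − ⟨∇'f, R_s∇h⟩`
with `∇f = L·df(L)` and `∇'f = df(L)·L`. -/
def quadBr (df dh : gl n → gl n) (L : gl n) : ℝ :=
  trForm (L * df L) (Ra (L * dh L)) - trForm (df L * L) (Ra (dh L * L))
    + trForm (L * df L) (Rs (dh L * L)) - trForm (df L * L) (Rs (L * dh L))

/-- The linear r-matrix bracket `{f,h}₁(L) = ⟨L, [R df(L), dh(L)] + [df(L), R dh(L)]⟩`. -/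
def linBr (df dh : gl n → gl n) (L : gl n) : ℝ :=
  trForm L (⁅Rop (df L), dh L⁆ + ⁅df L, Rop (dh L)⁆)

/-- The Toda Hamiltonians `h_k(L) = (1/k)·tr(L^k)`. -/
def hamH (k : ℕ) (L : gl n) : ℝ := (1 / (k : ℝ)) * (L ^ k).trace

/-- `a` is an orthogonal matrix. -/
def IsOrth (a : gl n) : Prop := aᵀ * a = 1

/-- `b` belongs to `B`: upper triangular with strictly positive diagonal entries. -/
def InB (b : gl n) : Prop := b.BlockTriangular id ∧ ∀ i, 0 < b i i

/-- `F : 𝔐 → ℝ` is invariant under the action `(g,L) ↦ (a g b⁻¹, a L a⁻¹)`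
of `S = O(n,ℝ) × B` on `𝔐 = GL(n,ℝ) × gl(n,ℝ)`. -/
def SInvariant (F : gl n × gl n → ℝ) : Prop :=
  ∀ a b g L : gl n, IsOrth a → InB b → IsUnit g.det →
    F (a * g * b⁻¹, a * L * a⁻¹) = F (g, L)

/-- `F` is smooth on `𝔐 = GL(n,ℝ) × gl(n,ℝ)`. -/
def SmoothOnM (F : gl n × gl n → ℝ) : Prop :=
  ContDiffOn ℝ (⊤ : ℕ∞) F {p : gl n × gl n | IsUnit p.1.det}

/-- `N` is the left derivative `∇₁F`:
`⟨∇₁F(g,L), X⟩ = d/dt|₀ F(e^{tX} g, L)` for all `X`. -/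
def IsGrad1 (F : gl n × gl n → ℝ) (N : gl n × gl n → gl n) : Prop :=
  ∀ g L : gl n, IsUnit g.det → ∀ X : gl n,
    HasDerivAt (fun t : ℝ => F (NormedSpace.exp (t • X) * g, L)) (trForm (N (g, L)) X) 0

/-- `N` is the right derivative `∇₁'F`:
`⟨∇₁'F(g,L), X⟩ = d/dt|₀ F(g e^{tX}, L)` for all `X`. -/
def IsGrad1' (F : gl n × gl n → ℝ) (N : gl n × gl n → gl n) : Prop :=
  ∀ g L : gl n, IsUnit g.det → ∀ X : gl n,
    HasDerivAt (fun t : ℝ => F (g * NormedSpace.exp (t • X), L)) (trForm (N (g, L)) X) 0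

/-- `D` is the gradient `d₂F` of `F` in the second argument. -/
def IsGrad2 (F : gl n × gl n → ℝ) (D : gl n × gl n → gl n) : Prop :=
  ∀ g L : gl n, IsUnit g.det → ∀ Y : gl n,
    HasDerivAt (fun t : ℝ => F (g, L + t • Y)) (trForm (D (g, L)) Y) 0

/-- The quadratic bracket `{F,H}₂(g,L)` on `𝔐`, expressed through the derivative data
`nf = ∇₁F(g,L)`, `nf' = ∇₁'F(g,L)`, `d2f = d₂F(g,L)` and likewise for `H`:
`⟨R_a∇₁F, ∇₁H⟩ − ⟨R_a∇₁'F, ∇₁'H⟩ + ⟨∇₂F − ∇₂'F, r₊∇₂'H − r₋∇₂H⟩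
 + ⟨∇₁F, r₊∇₂'H − r₋∇₂H⟩ − ⟨∇₁H, r₊∇₂'F − r₋∇₂F⟩`. -/
def pb2 (nf nf' d2f nh nh' d2h L : gl n) : ℝ :=
  trForm (Ra nf) nh - trForm (Ra nf') nh'
    + trForm (L * d2f - d2f * L) (rPlus (d2h * L) - rMinus (L * d2h))
    + trForm nf (rPlus (d2h * L) - rMinus (L * d2h))
    - trForm nh (rPlus (d2f * L) - rMinus (L * d2f))

/-- The canonical bracket `{F,H}₁(g,L)` on `𝔐`, expressed through the derivative data:
`⟨∇₁F, d₂H⟩ − ⟨∇₁H, d₂F⟩ + ⟨L, [d₂F, d₂H]⟩`. -/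
def pb1 (nf d2f nh d2h L : gl n) : ℝ :=
  trForm nf d2h - trForm nh d2f + trForm L ⁅d2f, d2h⁆

attribute [local instance] Matrix.linftyOpNormedAddCommGroup Matrix.linftyOpNormedSpace Matrix.linftyOpNormedRing Matrix.linftyOpNormedAlgebra

lemma matrix_eq_of_trace_mul {X : gl n} (h : ∀ Y : gl n, (X * Y).trace = 0) : X = 0 := by
  have h1 : ∑ i, ∑ j, X i j * X i j = 0 := by
    simpa [Matrix.trace, Matrix.diag, Matrix.mul_apply, Matrix.transpose_apply] using h Xᵀ
  ext i j
  have hnn : ∀ i ∈ (Finset.univ : Finset (Fin n)), (0:ℝ) ≤ ∑ j, X i j * X i j :=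
    fun i _ => Finset.sum_nonneg fun j _ => mul_self_nonneg _
  have h2 := (Finset.sum_eq_zero_iff_of_nonneg hnn).mp h1 i (Finset.mem_univ i)
  have h3 := (Finset.sum_eq_zero_iff_of_nonneg
    (fun j _ => mul_self_nonneg (X i j))).mp h2 j (Finset.mem_univ j)
  simpa using mul_self_eq_zero.mp h3

lemma hasDerivAt_matPow (L Y : gl n) (m : ℕ) :
    HasDerivAt (fun t : ℝ => (L + t • Y) ^ m)
      (∑ i ∈ Finset.range m, L ^ i * Y * L ^ (m - 1 - i)) 0 := by
  induction m with
  | zero => simp only [pow_zero, Finset.range_zero, Finset.sum_empty]; exact hasDerivAt_const (0:ℝ) (1 : gl n)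
  | succ m ih =>
    have hbase : HasDerivAt (fun t : ℝ => L + t • Y) Y 0 := by
      have h := ((hasDerivAt_id (0:ℝ)).smul_const Y).const_add L; rw [one_smul] at h; exact h
    have hmul := hbase.mul ih
    simp only [zero_smul, add_zero] at hmul
    have hsum : (∑ i ∈ Finset.range (m+1), L ^ i * Y * L ^ (m + 1 - 1 - i))
        = Y * L ^ m + L * ∑ i ∈ Finset.range m, L ^ i * Y * L ^ (m - 1 - i) := by
      rw [Finset.sum_range_succ', Finset.mul_sum, add_comm]
      simp only [pow_zero, one_mul, Nat.add_sub_cancel]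
      congr 1
      refine Finset.sum_congr rfl fun i hi => ?_
      rw [show m - (i+1) = m - 1 - i from by omega]; simp only [pow_succ', mul_assoc]
    rw [hsum]
    have hfun : (fun t : ℝ => (L + t • Y) ^ (m+1))
        = fun t : ℝ => (L + t • Y) * (L + t • Y) ^ m := by
      funext t; rw [pow_succ']
    rw [hfun]
    exact hmul

lemma hasDerivAt_tracePow (L Y : gl n) (m : ℕ) :
    HasDerivAt (fun t : ℝ => ((L + t • Y) ^ m).trace)
      ((m : ℝ) * (L ^ (m-1) * Y).trace) 0 := by
  have h := hasDerivAt_matPow L Y m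
  have hclm := ((Matrix.traceLinearMap (Fin n) ℝ ℝ).toContinuousLinearMap.hasFDerivAt
    (x := (L + (0:ℝ) • Y) ^ m)).comp_hasDerivAt 0 h
  refine hclm.congr_deriv ?_; symm
  change _ = Matrix.trace (∑ i ∈ Finset.range m, L ^ i * Y * L ^ (m - 1 - i))
  simp only [Matrix.trace_sum]
  have hterm : ∀ i ∈ Finset.range m,
      (L ^ i * Y * L ^ (m-1-i)).trace = (L ^ (m-1) * Y).trace := by
    intro i hi
    have hi' := Finset.mem_range.mp hi
    rw [Matrix.trace_mul_comm, ← mul_assoc, ← pow_add,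
      show m - 1 - i + i = m - 1 from by omega]
  rw [Finset.sum_congr rfl hterm, Finset.sum_const, Finset.card_range, nsmul_eq_mul]


lemma hamH_hasDerivAt (m : ℕ) (hm : 1 ≤ m) (L Y : gl n) :
    HasDerivAt (fun t : ℝ => hamH m (L + t • Y)) ((L ^ (m-1) * Y).trace) 0 := by
  have hm0 : (m : ℝ) ≠ 0 := Nat.cast_ne_zero.mpr (by omega)
  have h := (hasDerivAt_tracePow L Y m).const_mul (1/(m:ℝ))
  have heq : (1/(m:ℝ)) * ((m : ℝ) * (L ^ (m-1) * Y).trace) = (L ^ (m-1) * Y).trace := by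
    field_simp
  rw [heq] at h
  exact h

lemma grad_eq {m : ℕ} (hm : 1 ≤ m) {dh : gl n → gl n}
    (hdh : IsGradient (hamH (n := n) m) dh) (L : gl n) : dh L = L ^ (m-1) := by
  have key : ∀ Y, trForm (dh L) Y = (L ^ (m-1) * Y).trace :=
    fun Y => (hdh L Y).unique (hamH_hasDerivAt m hm L Y)
  have h0 : ∀ Y, ((dh L - L ^ (m-1)) * Y).trace = 0 := by
    intro Y
    have hky := key Y
    simp only [trForm] at hky
    rw [Matrix.sub_mul, Matrix.trace_sub, hky, sub_self]
  exact sub_eq_zero.mp (matrix_eq_of_trace_mul h0)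

/-- the Hamiltonians `h_k(L) = (1/k)·tr(L^k)` are in involution with
respect to both the linear and the quadratic r-matrix brackets. -/
theorem stmt6 (n j k : ℕ) (hj : 1 ≤ j) (hk : 1 ≤ k)
    (dhj dhk : gl n → gl n)
    (hdhj : IsGradient (hamH (n := n) j) dhj)
    (hdhk : IsGradient (hamH (n := n) k) dhk)
    (L : gl n) :
    linBr dhj dhk L = 0 ∧ quadBr dhj dhk L = 0 := by
  have hA := grad_eq hj hdhj L
  have hB := grad_eq hk hdhk L
  have hLA : L * L ^ (j-1) = L ^ (j-1) * L := ((Commute.refl L).pow_right (j-1)).eq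
  have hLB : L * L ^ (k-1) = L ^ (k-1) * L := ((Commute.refl L).pow_right (k-1)).eq
  constructor
  · have e1 : (L * (Rop (L ^ (j-1)) * L ^ (k-1))).trace
        = (L * (L ^ (k-1) * Rop (L ^ (j-1)))).trace := by
      rw [← mul_assoc, Matrix.trace_mul_comm, ← mul_assoc, ← hLB, mul_assoc]
    have e2 : (L * (Rop (L ^ (k-1)) * L ^ (j-1))).trace
        = (L * (L ^ (j-1) * Rop (L ^ (k-1)))).trace := by
      rw [← mul_assoc, Matrix.trace_mul_comm, ← mul_assoc, ← hLA, mul_assoc]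
    simp only [linBr, trForm, hA, hB, Ring.lie_def, Matrix.mul_add, Matrix.mul_sub,
      Matrix.trace_add, Matrix.trace_sub]
    rw [e1, e2]
    ring
  · simp only [quadBr, hA, hB, ← hLA, ← hLB]
    ring
end
end

section
/- Proposition 1 (simplified form of the quadratic bracket on invariant functions): If F and H are smooth S-invariant functions on 𝔐 = GL(n,ℝ) × gl(n,ℝ), then at every (g,L), 2·{F,H}_2(g,L) = ⟨∇₂F, ∇₂'H⟩ − ⟨∇₂H, ∇₂'F⟩ + ⟨∇₁F, ∇₂'H + ∇₂H⟩ − ⟨∇₁H, ∇₂'F + ∇₂F⟩, with all derivatives taken at (g,L). -/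
open Matrix

noncomputable section

attribute [local instance] Matrix.frobeniusNormedAddCommGroup Matrix.frobeniusNormedSpace

variable {n : ℕ}

section MyAux
variable {n : ℕ}
attribute [local instance] Matrix.frobeniusNormedRing Matrix.frobeniusNormedAlgebra

lemma trForm_eq (X Y : gl n) : trForm X Y = ∑ i, ∑ j, X i j * Y j i := by
  simp [trForm, Matrix.trace, Matrix.diag, Matrix.mul_apply]

lemma trForm_comm (X Y : gl n) : trForm X Y = trForm Y X := by
  rw [trForm, trForm, Matrix.trace_mul_comm]

lemma trForm_add_left (X Y Z : gl n) : trForm (X + Y) Z = trForm X Z + trForm Y Z := by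
  simp [trForm, Matrix.add_mul]

lemma trForm_sub_left (X Y Z : gl n) : trForm (X - Y) Z = trForm X Z - trForm Y Z := by
  simp [trForm, Matrix.sub_mul]

lemma trForm_add_right (X Y Z : gl n) : trForm X (Y + Z) = trForm X Y + trForm X Z := by
  simp [trForm, Matrix.mul_add]

lemma trForm_sub_right (X Y Z : gl n) : trForm X (Y - Z) = trForm X Y - trForm X Z := by
  simp [trForm, Matrix.mul_sub]

lemma trForm_smul_right (c : ℝ) (X Y : gl n) : trForm X (c • Y) = c * trForm X Y := by
  simp [trForm, Matrix.mul_smul]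

lemma Ra_sub (X Y : gl n) : Ra (X - Y) = Ra X - Ra Y := by
  ext i j
  simp only [Ra, upPart, lowPart, Matrix.smul_apply, Matrix.sub_apply, Matrix.of_apply,
    smul_eq_mul]
  split_ifs <;> ring

lemma trForm_Ra_left (X Y : gl n) : trForm (Ra X) Y = - trForm X (Ra Y) := by
  rw [trForm_eq, trForm_eq, ← Finset.sum_neg_distrib]
  refine Finset.sum_congr rfl fun i _ => ?_
  rw [← Finset.sum_neg_distrib]
  refine Finset.sum_congr rfl fun j _ => ?_
  simp only [Ra, upPart, lowPart, Matrix.smul_apply, Matrix.sub_apply, Matrix.of_apply,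
    smul_eq_mul]
  split_ifs <;> ring

lemma Ra_transpose (X : gl n) : (Ra X)ᵀ = - Ra Xᵀ := by
  ext i j
  simp only [Ra, upPart, lowPart, Matrix.transpose_apply, Matrix.smul_apply, Matrix.sub_apply,
    Matrix.of_apply, Matrix.neg_apply, smul_eq_mul]
  split_ifs <;> ring

lemma trForm_skew_symm (K S : gl n) (hK : Kᵀ = -K) (hS : Sᵀ = S) : trForm K S = 0 := by
  have h : trForm K S = - trForm K S := by
    calc trForm K S = ((K * S)ᵀ).trace := (Matrix.trace_transpose _).symm
    _ = (Sᵀ * Kᵀ).trace := by rw [Matrix.transpose_mul]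
    _ = -(S * K).trace := by rw [hK, hS, Matrix.mul_neg, Matrix.trace_neg]
    _ = - trForm K S := by rw [Matrix.trace_mul_comm]; rfl
  linarith

lemma trForm_Ra_symm_zero (A B : gl n) (hA : Aᵀ = A) (hB : Bᵀ = B) : trForm (Ra A) B = 0 := by
  refine trForm_skew_symm _ _ ?_ hB
  rw [Ra_transpose, hA]

lemma trForm_Ra_upper (a' b' : gl n) (ha : ∀ i j : Fin n, j ≤ i → a' i j = 0)
    (hb : ∀ i j : Fin n, j ≤ i → b' i j = 0) : trForm (Ra a') b' = 0 := by
  rw [trForm_eq]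
  refine Finset.sum_eq_zero fun i _ => Finset.sum_eq_zero fun j _ => ?_
  rcases le_or_gt j i with h | h
  · have h1 : a' i j = 0 := ha i j h
    simp [Ra, upPart, lowPart, h1]
  · have h2 : b' j i = 0 := hb j i h.le
    simp [h2]

lemma key_rw (h L : gl n) :
    rPlus (h * L) - rMinus (L * h) = Ra (h * L - L * h) + (1/2 : ℝ) • (h * L + L * h) := by
  rw [Ra_sub, rPlus, rMinus, smul_add]
  abel

end MyAux
section MyAux2
variable {n : ℕ}

lemma trForm_cyc (L f h : gl n) : trForm (L * f) (L * h) = trForm (f * L) (h * L) := by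
  simp only [trForm]
  rw [mul_assoc, Matrix.trace_mul_comm]
  congr 1
  simp only [mul_assoc]

lemma trForm_comm_shift (d X L : gl n) :
    trForm d (X * L - L * X) = trForm (L * d - d * L) X := by
  simp only [trForm, Matrix.mul_sub, Matrix.sub_mul, Matrix.trace_sub]
  congr 1
  · rw [← mul_assoc, Matrix.trace_mul_comm, ← mul_assoc]
  · rw [← mul_assoc]

lemma main_alg (a a' f b b' h L : gl n)
    (hA : (a + L * f - f * L)ᵀ = a + L * f - f * L)
    (hB : (b + L * h - h * L)ᵀ = b + L * h - h * L)
    (ha' : ∀ i j : Fin n, j ≤ i → a' i j = 0)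
    (hb' : ∀ i j : Fin n, j ≤ i → b' i j = 0) :
    2 * pb2 a a' f b b' h L =
      trForm (L * f) (h * L) - trForm (L * h) (f * L)
      + trForm a (h * L + L * h) - trForm b (f * L + L * f) := by
  have e1 : trForm (Ra (a - (f * L - L * f))) (b - (h * L - L * h)) = 0 := by
    have h1 : a - (f * L - L * f) = a + L * f - f * L := by abel
    have h2 : b - (h * L - L * h) = b + L * h - h * L := by abel
    rw [h1, h2]; exact trForm_Ra_symm_zero _ _ hA hB
  have e2 : trForm (Ra a') b' = 0 := trForm_Ra_upper _ _ ha' hb'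
  have e3 : trForm (Ra a) (h * L - L * h) = - trForm a (Ra (h * L - L * h)) :=
    trForm_Ra_left _ _
  have e4 : trForm (Ra (f * L - L * f)) (h * L - L * h)
      = - trForm (f * L - L * f) (Ra (h * L - L * h)) := trForm_Ra_left _ _
  have e5 : trForm (Ra b) (f * L - L * f) = - trForm b (Ra (f * L - L * f)) :=
    trForm_Ra_left _ _
  have e6 : trForm (Ra (f * L - L * f)) b = - trForm (Ra b) (f * L - L * f) := by
    rw [trForm_Ra_left, trForm_comm]
  have e7 : trForm (L * f) (L * h) = trForm (f * L) (h * L) := trForm_cyc _ _ _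
  have e8 : trForm (f * L) (L * h) = trForm (L * h) (f * L) := trForm_comm _ _
  rw [pb2, key_rw, key_rw]
  simp only [Ra_sub, trForm_add_left, trForm_sub_left, trForm_add_right, trForm_sub_right,
    trForm_smul_right] at e1 e3 e4 e5 e6 ⊢
  linarith [e1, e2, e3, e4, e5, e6, e7, e8]

end MyAux2
section MyAux3
variable {n : ℕ}
attribute [local instance] Matrix.frobeniusNormedRing Matrix.frobeniusNormedAlgebra

lemma pow_blockTriangular {A : gl n} (hA : A.BlockTriangular id) (k : ℕ) :
    (A ^ k).BlockTriangular id := by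
  induction k with
  | zero => simpa using Matrix.blockTriangular_one
  | succ k ih => rw [pow_succ]; exact ih.mul hA

lemma pow_diag {A : gl n} (hA : A.BlockTriangular id) (k : ℕ) (i : Fin n) :
    (A ^ k) i i = (A i i) ^ k := by
  induction k with
  | zero => simp [Matrix.one_apply]
  | succ k ih =>
    rw [pow_succ, pow_succ, Matrix.mul_apply, Finset.sum_eq_single i]
    · rw [ih]
    · intro j _ hj
      rcases lt_or_gt_of_ne hj with hlt | hgt
      · rw [pow_blockTriangular hA k (show (id j : Fin n) < id i from hlt), zero_mul]
      · rw [hA (show (id i : Fin n) < id j from hgt), mul_zero]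
    · intro hmem; exact absurd (Finset.mem_univ i) hmem

lemma entry_exp (A : gl n) (i j : Fin n) :
    (NormedSpace.exp A) i j = ∑' k : ℕ, ((k.factorial : ℝ)⁻¹ * (A ^ k) i j) := by
  let E : gl n →ₗ[ℝ] ℝ :=
    { toFun := fun M => M i j, map_add' := fun x y => rfl, map_smul' := fun c x => rfl }
  let Ec : gl n →L[ℝ] ℝ := ⟨E, E.continuous_of_finiteDimensional⟩
  have hs : Summable (fun k : ℕ => ((k.factorial : ℝ)⁻¹ : ℝ) • A ^ k) :=
    NormedSpace.expSeries_summable' (𝕂 := ℝ) A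
  rw [NormedSpace.exp_eq_tsum (𝕂 := ℝ)]
  calc (∑' k : ℕ, ((k.factorial : ℝ)⁻¹ : ℝ) • A ^ k) i j
      = Ec (∑' k : ℕ, ((k.factorial : ℝ)⁻¹ : ℝ) • A ^ k) := rfl
    _ = ∑' k : ℕ, Ec (((k.factorial : ℝ)⁻¹ : ℝ) • A ^ k) := Ec.map_tsum hs
    _ = ∑' k : ℕ, ((k.factorial : ℝ)⁻¹ * (A ^ k) i j) :=
        tsum_congr fun k => by simp [Ec, E, smul_eq_mul]; exact Or.inl rfl

lemma exp_blockTriangular {A : gl n} (hA : A.BlockTriangular id) :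
    (NormedSpace.exp A).BlockTriangular id := by
  intro i j hij
  rw [entry_exp]
  have hz : ∀ k : ℕ, ((k.factorial : ℝ)⁻¹ * (A ^ k) i j) = 0 := fun k => by
    rw [pow_blockTriangular hA k hij, mul_zero]
  rw [tsum_congr hz, tsum_zero]

lemma exp_diag {A : gl n} (hA : A.BlockTriangular id) (i : Fin n) :
    (NormedSpace.exp A) i i = Real.exp (A i i) := by
  rw [entry_exp, Real.exp_eq_exp_ℝ, NormedSpace.exp_eq_tsum (𝕂 := ℝ)]
  exact tsum_congr fun k => by rw [pow_diag hA, smul_eq_mul]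

lemma exp_InB {A : gl n} (hA : A.BlockTriangular id) : InB (NormedSpace.exp A) :=
  ⟨exp_blockTriangular hA, fun i => by rw [exp_diag hA]; exact Real.exp_pos _⟩

lemma exp_isOrth {X : gl n} (hX : Xᵀ = -X) : IsOrth (NormedSpace.exp X) := by
  unfold IsOrth
  rw [← Matrix.exp_transpose, hX, ← Matrix.exp_add_of_commute (-X) X (Commute.neg_left rfl),
    neg_add_cancel, NormedSpace.exp_zero]

lemma exp_inv_eq (X : gl n) : (NormedSpace.exp X)⁻¹ = NormedSpace.exp (-X) :=
  (Matrix.exp_neg X).symm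

end MyAux3
section MyAux4
variable {n : ℕ}
attribute [local instance] Matrix.frobeniusNormedRing Matrix.frobeniusNormedAlgebra

lemma isOpen_M : IsOpen {p : gl n × gl n | IsUnit p.1.det} := by
  have h : Continuous fun p : gl n × gl n => p.1.det := continuous_fst.matrix_det
  simpa [isUnit_iff_ne_zero] using isOpen_ne.preimage h

lemma deriv_exp0 (X : gl n) : HasDerivAt (fun t : ℝ => NormedSpace.exp (t • X)) X 0 := by
  have := hasDerivAt_exp_smul_const (𝕂 := ℝ) X 0
  simp at this
  exact this

lemma trForm_neg_right (X Y : gl n) : trForm X (-Y) = - trForm X Y := by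
  simp [trForm, Matrix.mul_neg]

variable {F : gl n × gl n → ℝ} {NF NF' DF : gl n × gl n → gl n} {g L : gl n}

lemma grad1_eq (hF : SmoothOnM F) (hNF : IsGrad1 F NF) (hg : IsUnit g.det) (X : gl n) :
    trForm (NF (g, L)) X = fderiv ℝ F (g, L) (X * g, 0) := by
  have hdiff : DifferentiableAt ℝ F (g, L) :=
    ((hF.contDiffAt (isOpen_M.mem_nhds hg)).differentiableAt (by simp))
  have hc : HasDerivAt (fun t : ℝ => (NormedSpace.exp (t • X) * g, L))
      ((X * g, (0 : gl n))) 0 := ((deriv_exp0 X).mul_const g).prodMk (hasDerivAt_const 0 L)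
  have h00 : (fun t : ℝ => (NormedSpace.exp (t • X) * g, L)) 0 = (g, L) := by
    simp [NormedSpace.exp_zero]
  have hφ : HasFDerivAt F (fderiv ℝ F (g, L))
      ((fun t : ℝ => (NormedSpace.exp (t • X) * g, L)) 0) := by
    rw [h00]; exact hdiff.hasFDerivAt
  have hder : HasDerivAt (fun t : ℝ => F (NormedSpace.exp (t • X) * g, L))
      (fderiv ℝ F (g, L) (X * g, 0)) 0 := hφ.comp_hasDerivAt 0 hc
  exact (hNF g L hg X).unique hder

lemma grad2_eq (hF : SmoothOnM F) (hDF : IsGrad2 F DF) (hg : IsUnit g.det) (Y : gl n) :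
    trForm (DF (g, L)) Y = fderiv ℝ F (g, L) (0, Y) := by
  have hdiff : DifferentiableAt ℝ F (g, L) :=
    ((hF.contDiffAt (isOpen_M.mem_nhds hg)).differentiableAt (by simp))
  have hc : HasDerivAt (fun t : ℝ => (g, L + t • Y)) (((0 : gl n), Y)) 0 := by
    have h2 : HasDerivAt (fun t : ℝ => L + t • Y) Y 0 := by
      have := ((hasDerivAt_id (0:ℝ)).smul_const Y).const_add L
      simp only [id, one_smul] at this
      exact this
    exact (hasDerivAt_const (0:ℝ) g).prodMk h2
  have h00 : (fun t : ℝ => (g, L + t • Y)) 0 = (g, L) := by simp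
  have hφ : HasFDerivAt F (fderiv ℝ F (g, L)) ((fun t : ℝ => (g, L + t • Y)) 0) := by
    rw [h00]; exact hdiff.hasFDerivAt
  have hder : HasDerivAt (fun t : ℝ => F (g, L + t • Y))
      (fderiv ℝ F (g, L) (0, Y)) 0 := hφ.comp_hasDerivAt 0 hc
  exact (hDF g L hg Y).unique hder

lemma skew_fact (hF : SmoothOnM F) (hFinv : SInvariant F) (hNF : IsGrad1 F NF)
    (hDF : IsGrad2 F DF) (hg : IsUnit g.det) :
    (NF (g, L) + L * DF (g, L) - DF (g, L) * L)ᵀ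
      = NF (g, L) + L * DF (g, L) - DF (g, L) * L := by
  set M := NF (g, L) + L * DF (g, L) - DF (g, L) * L with hM
  have hdiff : DifferentiableAt ℝ F (g, L) :=
    ((hF.contDiffAt (isOpen_M.mem_nhds hg)).differentiableAt (by simp))
  have key : ∀ X : gl n, Xᵀ = -X → trForm M X = 0 := by
    intro X hX
    have h2 : HasDerivAt (fun t : ℝ =>
        NormedSpace.exp (t • X) * L * NormedSpace.exp (t • (-X))) (X * L - L * X) 0 := by
      have ha := (deriv_exp0 X).mul_const L
      have hb := deriv_exp0 (-X)
      have := ha.mul hb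
      simp [NormedSpace.exp_zero, mul_neg, sub_eq_add_neg] at this ⊢
      exact this
    have hc : HasDerivAt (fun t : ℝ => (NormedSpace.exp (t • X) * g,
        NormedSpace.exp (t • X) * L * NormedSpace.exp (t • (-X))))
        ((X * g, X * L - L * X)) 0 := ((deriv_exp0 X).mul_const g).prodMk h2
    have h00 : (fun t : ℝ => (NormedSpace.exp (t • X) * g,
        NormedSpace.exp (t • X) * L * NormedSpace.exp (t • (-X)))) 0 = (g, L) := by
      simp [NormedSpace.exp_zero]
    have hφ : HasFDerivAt F (fderiv ℝ F (g, L)) ((fun t : ℝ => (NormedSpace.exp (t • X) * g,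
        NormedSpace.exp (t • X) * L * NormedSpace.exp (t • (-X)))) 0) := by
      rw [h00]; exact hdiff.hasFDerivAt
    have hder : HasDerivAt (fun t : ℝ => F (NormedSpace.exp (t • X) * g,
        NormedSpace.exp (t • X) * L * NormedSpace.exp (t • (-X))))
        (fderiv ℝ F (g, L) (X * g, X * L - L * X)) 0 := hφ.comp_hasDerivAt 0 hc
    have hconst : (fun t : ℝ => F (NormedSpace.exp (t • X) * g,
        NormedSpace.exp (t • X) * L * NormedSpace.exp (t • (-X))))
        = fun _ => F (g, L) := by
      funext t
      have ha : IsOrth (NormedSpace.exp (t • X)) := by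
        refine exp_isOrth ?_
        rw [Matrix.transpose_smul, hX, smul_neg]
      have hinv : (NormedSpace.exp (t • X))⁻¹ = NormedSpace.exp (t • (-X)) := by
        rw [exp_inv_eq, smul_neg]
      have hb : InB (1 : gl n) := ⟨Matrix.blockTriangular_one, fun i => by simp⟩
      have := hFinv (NormedSpace.exp (t • X)) 1 g L ha hb hg
      simpa [hinv, inv_one] using this
    rw [hconst] at hder
    have hzero : fderiv ℝ F (g, L) (X * g, X * L - L * X) = 0 :=
      hder.unique (hasDerivAt_const _ _)
    have lsplit : fderiv ℝ F (g, L) (X * g, X * L - L * X)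
        = fderiv ℝ F (g, L) (X * g, 0) + fderiv ℝ F (g, L) (0, X * L - L * X) := by
      rw [← map_add]
      congr 1
      simp
    have e1 := grad1_eq (L := L) hF hNF hg X
    have e2 := grad2_eq (L := L) hF hDF hg (X * L - L * X)
    have e3 : trForm (DF (g, L)) (X * L - L * X)
        = trForm (L * DF (g, L) - DF (g, L) * L) X := trForm_comm_shift _ _ _
    have e4 : trForm M X = trForm (NF (g, L)) X
        + trForm (L * DF (g, L) - DF (g, L) * L) X := by
      rw [hM, show NF (g, L) + L * DF (g, L) - DF (g, L) * L
        = NF (g, L) + (L * DF (g, L) - DF (g, L) * L) by abel, trForm_add_left]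
    rw [e4, e1, ← e3, e2, ← lsplit, hzero]
  -- conclude that M is symmetric
  have hKt : (M - Mᵀ)ᵀ = -(M - Mᵀ) := by
    rw [Matrix.transpose_sub, Matrix.transpose_transpose, neg_sub]
  have h1 : trForm M (M - Mᵀ) = 0 := key _ hKt
  have h2 : trForm Mᵀ (M - Mᵀ) = - trForm M (M - Mᵀ) := by
    calc trForm Mᵀ (M - Mᵀ) = ((Mᵀ * (M - Mᵀ))ᵀ).trace := (Matrix.trace_transpose _).symm
      _ = ((M - Mᵀ)ᵀ * M).trace := by rw [Matrix.transpose_mul, Matrix.transpose_transpose]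
      _ = -((M - Mᵀ) * M).trace := by rw [hKt, Matrix.neg_mul, Matrix.trace_neg]
      _ = - trForm M (M - Mᵀ) := by rw [Matrix.trace_mul_comm]; rfl
  have h3 : trForm (M - Mᵀ) ((M - Mᵀ)ᵀ) = 0 := by
    rw [hKt, trForm_neg_right, trForm_sub_left, h1, h2, h1]
    ring
  have h4 : ∑ i, ∑ j, ((M - Mᵀ) i j)^2 = 0 := by
    rw [← h3, trForm_eq]
    refine Finset.sum_congr rfl fun i _ => Finset.sum_congr rfl fun j _ => ?_
    rw [Matrix.transpose_apply, sq]
  have h5 : M - Mᵀ = 0 := by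
    ext i j
    have hnn : ∀ i ∈ (Finset.univ : Finset (Fin n)),
        (0:ℝ) ≤ ∑ j, ((M - Mᵀ) i j)^2 :=
      fun i _ => Finset.sum_nonneg fun j _ => sq_nonneg _
    have hrow := (Finset.sum_eq_zero_iff_of_nonneg hnn).mp h4 i (Finset.mem_univ i)
    have hentry := (Finset.sum_eq_zero_iff_of_nonneg
      (fun j _ => sq_nonneg ((M - Mᵀ) i j))).mp hrow j (Finset.mem_univ j)
    simpa using pow_eq_zero_iff (n := 2) (by norm_num) |>.mp hentry
  have := sub_eq_zero.mp h5
  rw [← this]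

end MyAux4
section MyAux5
variable {n : ℕ}
attribute [local instance] Matrix.frobeniusNormedRing Matrix.frobeniusNormedAlgebra

variable {F : gl n × gl n → ℝ} {NF' : gl n × gl n → gl n} {g L : gl n}

lemma upper_fact (hFinv : SInvariant F) (hNF' : IsGrad1' F NF') (hg : IsUnit g.det) :
    ∀ i j : Fin n, j ≤ i → NF' (g, L) i j = 0 := by
  have key : ∀ X : gl n, X.BlockTriangular id → trForm (NF' (g, L)) X = 0 := by
    intro X hX
    have hconst : (fun t : ℝ => F (g * NormedSpace.exp (t • X), L)) = fun _ => F (g, L) := by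
      funext t
      have htri : (-(t • X)).BlockTriangular id := by
        intro i j hij
        simp [hX hij]
      have hb : InB (NormedSpace.exp (-(t • X))) := exp_InB htri
      have hbinv : (NormedSpace.exp (-(t • X)))⁻¹ = NormedSpace.exp (t • X) := by
        rw [exp_inv_eq, neg_neg]
      have hOne : IsOrth (1 : gl n) := by simp [IsOrth]
      have := hFinv 1 (NormedSpace.exp (-(t • X))) g L hOne hb hg
      simpa [hbinv, inv_one] using this
    have h := hNF' g L hg X
    rw [hconst] at h
    exact h.unique (hasDerivAt_const _ _)
  intro i j hji
  have h := key (Matrix.single j i 1)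
    (Matrix.blockTriangular_single (show (id j : Fin n) ≤ id i from hji) 1)
  rw [trForm_eq] at h
  rw [← h]
  rw [Finset.sum_eq_single i]
  · rw [Finset.sum_eq_single j]
    · simp [Matrix.single]
    · intro q _ hq; simp [Matrix.single, Ne.symm hq]
    · intro hmem; exact absurd (Finset.mem_univ j) hmem
  · intro p _ hp
    refine Finset.sum_eq_zero fun q _ => ?_
    simp [Matrix.single, Ne.symm hp]
  · intro hmem; exact absurd (Finset.mem_univ i) hmem

end MyAux5

/-- Proposition 1, simplified bracket: for `S`-invariant `F, H`,
`2{F,H}₂ = ⟨∇₂F, ∇₂'H⟩ − ⟨∇₂H, ∇₂'F⟩ + ⟨∇₁F, ∇₂'H + ∇₂H⟩ − ⟨∇₁H, ∇₂'F + ∇₂F⟩`. -/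
theorem stmt14 (n : ℕ) (F H : gl n × gl n → ℝ)
    (hF : SmoothOnM F) (hH : SmoothOnM H)
    (hFinv : SInvariant F) (hHinv : SInvariant H)
    (NF NF' DF NH NH' DH : gl n × gl n → gl n)
    (hNF : IsGrad1 F NF) (hNF' : IsGrad1' F NF') (hDF : IsGrad2 F DF)
    (hNH : IsGrad1 H NH) (hNH' : IsGrad1' H NH') (hDH : IsGrad2 H DH)
    (g L : gl n) (hg : IsUnit g.det) :
    2 * pb2 (NF (g, L)) (NF' (g, L)) (DF (g, L)) (NH (g, L)) (NH' (g, L)) (DH (g, L)) L =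
      trForm (L * DF (g, L)) (DH (g, L) * L) - trForm (L * DH (g, L)) (DF (g, L) * L)
      + trForm (NF (g, L)) (DH (g, L) * L + L * DH (g, L))
      - trForm (NH (g, L)) (DF (g, L) * L + L * DF (g, L)) := by
  exact main_alg _ _ _ _ _ _ L
    (skew_fact hF hFinv hNF hDF hg)
    (skew_fact hH hHinv hNH hDH hg)
    (upper_fact hFinv hNF' hg)
    (upper_fact hHinv hNH' hg)
end
end
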